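/- Let L ⊆ M_{n,ℓ,t} be a t-spread strongly stable set with ℓ < d. Then |Shad_t(L)| = Σ_{k = 1 + t_1 + ... + t_{ℓ-1}}^{n - t_ℓ} m_{≤ k}(L). -/

import Mathlib

open Multiset Finset

/-- A monomial in `K[x_1,…,x_n]` is encoded by the multiset of its variable
indices (each index lies in `[1, n]`).  `TSpread n d t u` says that `u` is a
t-spread monomial: its degree is at most `d`, its indices lie in `[1,n]`, and
consecutive indices `j_k ≤ j_{k+1}` of its sorted index list satisfy
`j_{k+1} - j_k ≥ t_k` (here `t 1 = t_1, …, t (d-1) = t_{d-1}`). -/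
def TSpread (n d : ℕ) (t : ℕ → ℕ) (u : Multiset ℕ) : Prop :=
  u.card ≤ d ∧ (∀ i ∈ u, 1 ≤ i ∧ i ≤ n) ∧
    ∀ k : ℕ, k + 1 < u.card →
      (u.sort (· ≤ ·)).getD k 0 + t (k + 1) ≤ (u.sort (· ≤ ·)).getD (k + 1) 0

/-- `Mset n d ℓ t` : the set `M_{n,ℓ,t}` of t-spread monomials of degree `ℓ`. -/
def Mset (n d ℓ : ℕ) (t : ℕ → ℕ) : Set (Multiset ℕ) :=
  {u | TSpread n d t u ∧ u.card = ℓ}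

/-- the t-spread shadow `Shad_t(L) = {x_i w : w ∈ L, x_i w t-spread, i = 1..n}`. -/
def Shad (n d : ℕ) (t : ℕ → ℕ) (L : Set (Multiset ℕ)) : Set (Multiset ℕ) :=
  {v | ∃ w ∈ L, ∃ i, 1 ≤ i ∧ i ≤ n ∧ v = i ::ₘ w ∧ TSpread n d t v}

/-- largest variable index dividing `u` (0 for the constant monomial). -/
def maxVar (u : Multiset ℕ) : ℕ := (u.sort (· ≤ ·)).getLastD 0

/-- `lexGE u v` : `u ≥_lex v` for monomials of equal degree, where the
lexicographic order is induced by `x_1 > x_2 > ⋯ > x_n`. -/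
def lexGE (u v : Multiset ℕ) : Prop :=
  u = v ∨ List.Lex (· < ·) (u.sort (· ≤ ·)) (v.sort (· ≤ ·))

/-- `L` is a t-spread strongly stable set. -/
def StronglyStableSet (n d : ℕ) (t : ℕ → ℕ) (L : Set (Multiset ℕ)) : Prop :=
  ∀ u ∈ L, ∀ i ∈ u, ∀ j : ℕ, 1 ≤ j → j < i →
    TSpread n d t (j ::ₘ u.erase i) → (j ::ₘ u.erase i) ∈ L

/-- `L` is a t-spread lex set (inside `M_{n,ℓ,t}`). -/
def LexSet (n d ℓ : ℕ) (t : ℕ → ℕ) (L : Set (Multiset ℕ)) : Prop :=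
  ∀ u ∈ L, ∀ v ∈ Mset n d ℓ t, lexGE v u → v ∈ L

/-- `m_i(L)` : number of monomials of `L` with largest variable index `i`. -/
noncomputable def mEq (i : ℕ) (L : Set (Multiset ℕ)) : ℕ :=
  {u ∈ L | maxVar u = i}.ncard

/-- `m_{≤ i}(L)` : number of monomials of `L` with largest variable index `≤ i`. -/
noncomputable def mLe (i : ℕ) (L : Set (Multiset ℕ)) : ℕ :=
  {u ∈ L | maxVar u ≤ i}.ncard

/-- `I` is (the set of monomials of) a monomial ideal of `K[x_1,…,x_n]`. -/
def MonIdeal (n : ℕ) (I : Set (Multiset ℕ)) : Prop :=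
  (∀ u ∈ I, ∀ i ∈ u, 1 ≤ i ∧ i ≤ n) ∧
    ∀ u ∈ I, ∀ i : ℕ, 1 ≤ i → i ≤ n → (i ::ₘ u) ∈ I

/-- `I` is generated by t-spread monomials. -/
def TSpreadGen (n d : ℕ) (t : ℕ → ℕ) (I : Set (Multiset ℕ)) : Prop :=
  ∀ u ∈ I, ∃ v ∈ I, TSpread n d t v ∧ v ≤ u

/-- The t-spread operator `a ↦ a^{(n,ℓ,t)}`:  if `a = Σ_{j=p}^{ℓ} C(a_j, j)` is
the Macaulay expansion of `a` with respect to `ℓ`, then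
`tOp t_ℓ ℓ a = Σ_{j=p+1}^{ℓ+1} C(a_{j-1} + 1 - t_ℓ, j)`, computed greedily. -/
noncomputable def tOp (s : ℕ) : ℕ → ℕ → ℕ
  | 0, _ => 0
  | ℓ + 1, a =>
    if a = 0 then 0
    else
      (sSup {b | Nat.choose b (ℓ + 1) ≤ a} + 1 - s).choose (ℓ + 2) +
        tOp s ℓ (a - Nat.choose (sSup {b | Nat.choose b (ℓ + 1) ≤ a}) (ℓ + 1))

/-- The graded Betti number `β_{i,j}(I)` of a t-spread strongly stable ideal,
via the Eliahou–Kervaire-type formula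
`β_{i,i+q}(I) = Σ_{u ∈ G(I)_q} C(max(u) - 1 - Σ_{h=1}^{q-1} t_h, i)`. -/
noncomputable def betti (t : ℕ → ℕ) (I : Set (Multiset ℕ)) (i j : ℕ) : ℕ :=
  ∑ᶠ u ∈ {u ∈ I | u.card = j - i ∧ ∀ v ∈ I, v ≤ u → v = u},
    (maxVar u - 1 - ∑ h ∈ Finset.Icc 1 (j - i - 1), t h).choose i

/-!
A monomial `v` of the shadow factors uniquely as `v = x_m · w'` with `m = max v`. Strong
stability puts `w' = v / x_m` back in `L` (it is `x_i w` with `x_m` replaced by the smaller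
`x_i`), and `v` is t-spread exactly when `w'` is and `max w' + t_ℓ ≤ m ≤ n`. Hence
`(w, k) ↦ x_{k + t_ℓ} · w` is a bijection from `{(w, k) : w ∈ L, max w ≤ k ≤ n - t_ℓ}` onto
the shadow, and counting by `k` gives the sum; its lower limit loses nothing, since every
t-spread monomial of degree `ℓ` has `max ≥ 1 + t_1 + ⋯ + t_{ℓ-1}`.
-/

namespace Multiset

theorem sort_cons_of_forall_le {α : Type*} [LinearOrder α] {w : Multiset α} {k : α}
    (h : ∀ i ∈ w, i ≤ k) : (k ::ₘ w).sort (· ≤ ·) = w.sort (· ≤ ·) ++ [k] := by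
  have hk : k ::ₘ w = ((w.sort (· ≤ ·) ++ [k] : List α) : Multiset α) := by
    rw [← Multiset.coe_add, Multiset.sort_eq, ← Multiset.singleton_add, add_comm]
    rfl
  rw [hk, Multiset.coe_sort]
  refine List.mergeSort_eq_self _ (List.pairwise_append.2
    ⟨Multiset.pairwise_sort _ _, List.pairwise_singleton _ _, fun a ha b hb => ?_⟩)
  rw [List.mem_singleton.1 hb]
  exact h a ((Multiset.mem_sort _).1 ha)

end Multiset

section MaxVar

variable {u w : Multiset ℕ} {i k : ℕ}

theorem maxVar_cons_of_forall_le (h : ∀ i ∈ w, i ≤ k) : maxVar (k ::ₘ w) = k := by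
  rw [maxVar, Multiset.sort_cons_of_forall_le h, List.getLastD_concat]

theorem maxVar_eq_sup (u : Multiset ℕ) : maxVar u = u.sup := by
  rcases eq_or_ne u 0 with rfl | hu
  · simp [maxVar]
  obtain ⟨m, hm, hmax⟩ := Multiset.exists_max_image id hu
  have hle : ∀ i ∈ u.erase m, i ≤ m := fun i hi => hmax i (Multiset.mem_of_mem_erase hi)
  rw [← Multiset.cons_erase hm, maxVar_cons_of_forall_le hle, Multiset.sup_cons,
    left_eq_sup]
  exact Multiset.sup_le.2 hle

theorem le_maxVar (h : i ∈ u) : i ≤ maxVar u :=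
  maxVar_eq_sup u ▸ Multiset.le_sup h

theorem maxVar_mem (hu : u ≠ 0) : maxVar u ∈ u := by
  obtain ⟨m, hm, hmax⟩ := Multiset.exists_max_image id hu
  rwa [maxVar_eq_sup, le_antisymm (Multiset.sup_le.2 hmax) (Multiset.le_sup hm)]

theorem maxVar_eq_getD (u : Multiset ℕ) :
    maxVar u = (u.sort (· ≤ ·)).getD (Multiset.card u - 1) 0 := by
  simp [maxVar, List.getLastD_eq_getLast?, List.getLast?_eq_getElem?,
    List.getD_eq_getElem?_getD]

end MaxVar

section TSpread

variable {n d : ℕ} {t : ℕ → ℕ} {u w : Multiset ℕ} {k : ℕ}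

theorem tSpread_cons_iff (hw : w ≠ 0) (hk : ∀ i ∈ w, i ≤ k) :
    TSpread n d t (k ::ₘ w) ↔ TSpread n d t w ∧ Multiset.card w < d ∧ 1 ≤ k ∧ k ≤ n ∧
      maxVar w + t (Multiset.card w) ≤ k := by
  simp only [TSpread, Multiset.card_cons, Multiset.mem_cons, forall_eq_or_imp,
    Multiset.sort_cons_of_forall_le hk]
  have hpos : 0 < Multiset.card w := Multiset.card_pos.2 hw
  set l := w.sort (· ≤ ·)
  have hl : l.length = Multiset.card w := Multiset.length_sort _
  have hlast : (l ++ [k]).getD (Multiset.card w) 0 = k := by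
    rw [List.getD_append_right _ _ _ _ hl.le, hl, Nat.sub_self]
    rfl
  have hspread : (∀ j, j + 1 < Multiset.card w + 1 →
        (l ++ [k]).getD j 0 + t (j + 1) ≤ (l ++ [k]).getD (j + 1) 0) ↔
      (∀ j, j + 1 < Multiset.card w → l.getD j 0 + t (j + 1) ≤ l.getD (j + 1) 0) ∧
        maxVar w + t (Multiset.card w) ≤ k := by
    constructor
    · intro h
      refine ⟨fun j hj => ?_, ?_⟩
      · have := h j (by omega)
        rwa [List.getD_append _ _ _ _ (by omega), List.getD_append _ _ _ _ (by omega)] at this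
      · have := h (Multiset.card w - 1) (by omega)
        rwa [List.getD_append _ _ _ _ (by omega), Nat.sub_add_cancel hpos, hlast,
          ← maxVar_eq_getD] at this
    · rintro ⟨h, hgap⟩ j hj
      rcases Nat.lt_or_eq_of_le (Nat.le_of_lt_succ hj) with hj | hj
      · rw [List.getD_append _ _ _ _ (by omega), List.getD_append _ _ _ _ (by omega)]
        exact h j hj
      · obtain rfl : j = Multiset.card w - 1 := by omega
        rwa [List.getD_append _ _ _ _ (by omega), Nat.sub_add_cancel hpos, hlast,
          ← maxVar_eq_getD]
  rw [hspread]
  constructor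
  · rintro ⟨hd, ⟨hk1, hmem⟩, hsp, hgap⟩
    exact ⟨⟨by omega, hmem, hsp⟩, hd, hk1.1, hk1.2, hgap⟩
  · rintro ⟨⟨-, hmem, hsp⟩, hd, hk1, hkn, hgap⟩
    exact ⟨hd, ⟨⟨hk1, hkn⟩, hmem⟩, hsp, hgap⟩

theorem TSpread.one_add_sum_le_maxVar (hu : TSpread n d t u) (hne : u ≠ 0) :
    1 + ∑ j ∈ Finset.Icc 1 (Multiset.card u - 1), t j ≤ maxVar u := by
  obtain ⟨-, hmem, hsp⟩ := hu
  have hpos : 0 < Multiset.card u := Multiset.card_pos.2 hne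
  have hl : (u.sort (· ≤ ·)).length = Multiset.card u := Multiset.length_sort _
  have key : ∀ m, m < Multiset.card u →
      1 + ∑ j ∈ Finset.Icc 1 m, t j ≤ (u.sort (· ≤ ·)).getD m 0 := by
    intro m hm
    induction m with
    | zero =>
      have h0 : (u.sort (· ≤ ·)).getD 0 0 ∈ u := by
        rw [List.getD_eq_getElem?_getD, List.getElem?_eq_getElem (by omega), Option.getD_some,
          ← Multiset.mem_sort (· ≤ ·)]
        exact List.getElem_mem _
      simpa using (hmem _ h0).1
    | succ m ih =>
      rw [Finset.sum_Icc_succ_top (by omega)]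
      have := hsp m hm
      have := ih (by omega)
      omega
  rw [maxVar_eq_getD]
  exact key _ (by omega)

end TSpread

theorem finite_Mset (n d ℓ : ℕ) (t : ℕ → ℕ) : (Mset n d ℓ t).Finite := by
  refine (Set.finite_Iic (ℓ • (Finset.Icc 1 n).val)).subset fun u hu => ?_
  obtain ⟨⟨-, hmem, -⟩, hcard⟩ := hu
  refine Multiset.le_iff_count.2 fun a => ?_
  rw [Multiset.count_nsmul]
  by_cases ha : a ∈ u
  · have ha' : a ∈ (Finset.Icc 1 n).val := Finset.mem_Icc.2 (hmem a ha)
    rw [Multiset.count_eq_one_of_mem (Finset.Icc 1 n).nodup ha', mul_one, ← hcard]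
    exact Multiset.count_le_card a u
  · simp [Multiset.count_eq_zero_of_notMem ha]

theorem ne_zero_of_mem_Mset {n d ℓ : ℕ} {t : ℕ → ℕ} {u : Multiset ℕ} (hℓ : 1 ≤ ℓ)
    (hu : u ∈ Mset n d ℓ t) : u ≠ 0 := by
  rintro rfl
  have := hu.2
  simp only [Multiset.card_zero] at this
  omega

theorem Set.ncard_setOf_le_le_eq_sum {α : Type*} {s : Set α} (hs : s.Finite) (g : α → ℕ)
    {lo hi : ℕ} (hlo : ∀ a ∈ s, lo ≤ g a) :
    {p : α × ℕ | p.1 ∈ s ∧ g p.1 ≤ p.2 ∧ p.2 ≤ hi}.ncard =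
      ∑ k ∈ Finset.Icc lo hi, {a ∈ s | g a ≤ k}.ncard := by
  classical
  have hprod : {p : α × ℕ | p.1 ∈ s ∧ g p.1 ≤ p.2 ∧ p.2 ≤ hi} =
      ↑((hs.toFinset ×ˢ Finset.Icc lo hi).filter fun p => g p.1 ≤ p.2) := by
    ext ⟨a, k⟩
    simp only [Set.mem_ofPred_eq, Finset.coe_filter, Finset.mem_product, Set.Finite.mem_toFinset,
      Finset.mem_Icc]
    constructor
    · rintro ⟨ha, hk, hki⟩
      exact ⟨⟨ha, (hlo a ha).trans hk, hki⟩, hk⟩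
    · rintro ⟨⟨ha, -, hki⟩, hk⟩
      exact ⟨ha, hk, hki⟩
  rw [hprod, Set.ncard_coe_finset, Finset.card_filter, Finset.sum_product_right]
  refine Finset.sum_congr rfl fun k _ => ?_
  rw [← Finset.card_filter, ← Set.ncard_coe_finset]
  congr 1
  ext a
  simp

theorem injOn_cons_add (s : ℕ) :
    Set.InjOn (fun p : Multiset ℕ × ℕ => (p.2 + s) ::ₘ p.1) {p | maxVar p.1 ≤ p.2} := by
  rintro ⟨w, k⟩ hk ⟨w', k'⟩ hk' h
  have hle : ∀ {w : Multiset ℕ} {k : ℕ}, maxVar w ≤ k → ∀ i ∈ w, i ≤ k + s :=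
    fun hk i hi => (le_maxVar hi).trans (hk.trans (Nat.le_add_right _ _))
  have hmax := congrArg maxVar h
  simp only [maxVar_cons_of_forall_le (hle hk), maxVar_cons_of_forall_le (hle hk')] at hmax
  obtain rfl : k = k' := by omega
  simp_all

section Shadow

variable {n d ℓ : ℕ} {t : ℕ → ℕ} {L : Set (Multiset ℕ)}

theorem StronglyStableSet.erase_maxVar_cons_mem (hss : StronglyStableSet n d t L)
    {u : Multiset ℕ} (hu : u ∈ L) {i : ℕ} (hi : 1 ≤ i)
    (hsp : TSpread n d t ((i ::ₘ u).erase (maxVar (i ::ₘ u)))) :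
    (i ::ₘ u).erase (maxVar (i ::ₘ u)) ∈ L := by
  have him : i ≤ maxVar (i ::ₘ u) := le_maxVar (Multiset.mem_cons_self i u)
  have hm : maxVar (i ::ₘ u) ∈ i ::ₘ u := maxVar_mem Multiset.cons_ne_zero
  generalize maxVar (i ::ₘ u) = m at *
  rcases him.eq_or_lt with rfl | hlt
  · rwa [Multiset.erase_cons_head]
  · rw [Multiset.erase_cons_tail _ hlt.ne] at hsp ⊢
    exact hss u hu m ((Multiset.mem_cons.1 hm).resolve_left hlt.ne') i hi hlt hsp

theorem shad_eq_image (hℓ1 : 1 ≤ ℓ) (hℓ : ℓ < d) (hLM : L ⊆ Mset n d ℓ t)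
    (hss : StronglyStableSet n d t L) :
    Shad n d t L = (fun p : Multiset ℕ × ℕ => (p.2 + t ℓ) ::ₘ p.1) ''
      {p | p.1 ∈ L ∧ maxVar p.1 ≤ p.2 ∧ p.2 ≤ n - t ℓ} := by
  ext v
  constructor
  · rintro ⟨w, hw, i, hi1, -, rfl, hv⟩
    set m := maxVar (i ::ₘ w)
    set w' := (i ::ₘ w).erase m
    have hv' : m ::ₘ w' = i ::ₘ w := Multiset.cons_erase (maxVar_mem Multiset.cons_ne_zero)
    have hcard : Multiset.card w' = ℓ := by
      have := congrArg Multiset.card hv'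
      rw [Multiset.card_cons, Multiset.card_cons, (hLM hw).2] at this
      omega
    have hw'0 : w' ≠ 0 := by
      rintro h
      rw [h, Multiset.card_zero] at hcard
      omega
    rw [← hv', tSpread_cons_iff hw'0 fun x hx => le_maxVar (Multiset.mem_of_mem_erase hx),
      hcard] at hv
    obtain ⟨hw'sp, -, -, hmn, hgap⟩ := hv
    refine ⟨(w', m - t ℓ), ⟨hss.erase_maxVar_cons_mem hw hi1 hw'sp, ?_, ?_⟩, ?_⟩
    · change maxVar w' ≤ m - t ℓ
      omega
    · change m - t ℓ ≤ n - t ℓ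
      omega
    · change (m - t ℓ + t ℓ) ::ₘ w' = i ::ₘ w
      rw [Nat.sub_add_cancel (by omega), hv']
  · rintro ⟨⟨w, k⟩, ⟨hw, hwk, hk⟩, rfl⟩
    dsimp only at hw hwk hk ⊢
    obtain ⟨hwsp, hcard⟩ := hLM hw
    have hw0 := ne_zero_of_mem_Mset hℓ1 (hLM hw)
    have h1 : 1 ≤ maxVar w := (hwsp.2.1 _ (maxVar_mem hw0)).1
    have hle : ∀ i ∈ w, i ≤ k + t ℓ :=
      fun i hi => (le_maxVar hi).trans (hwk.trans (Nat.le_add_right _ _))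
    refine ⟨w, hw, k + t ℓ, by omega, by omega, rfl, ?_⟩
    rw [tSpread_cons_iff hw0 hle, hcard]
    exact ⟨hwsp, hℓ, by omega, by omega, by omega⟩

end Shadow

theorem stmt5_general (n d ℓ : ℕ) (t : ℕ → ℕ) (hℓ1 : 1 ≤ ℓ) (hℓ : ℓ < d)
    (L : Set (Multiset ℕ)) (hLM : L ⊆ Mset n d ℓ t)
    (hss : StronglyStableSet n d t L) :
    (Shad n d t L).ncard =
      ∑ k ∈ Finset.Icc (1 + ∑ j ∈ Finset.Icc 1 (ℓ - 1), t j) (n - t ℓ), mLe k L := by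
  have hL : L.Finite := (finite_Mset n d ℓ t).subset hLM
  have hlo : ∀ w ∈ L, 1 + ∑ j ∈ Finset.Icc 1 (ℓ - 1), t j ≤ maxVar w := fun w hw => by
    simpa [(hLM hw).2] using (hLM hw).1.one_add_sum_le_maxVar (ne_zero_of_mem_Mset hℓ1 (hLM hw))
  rw [shad_eq_image hℓ1 hℓ hLM hss, ((injOn_cons_add (t ℓ)).mono fun p hp => hp.2.1).ncard_image,
    Set.ncard_setOf_le_le_eq_sum hL maxVar hlo]
  rfl

/-- for a t-spread strongly stable set `L ⊆ M_{n,ℓ,t}` with `ℓ < d`,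
`|Shad_t(L)| = Σ_{k = 1 + t_1 + ⋯ + t_{ℓ-1}}^{n - t_ℓ} m_{≤ k}(L)`. -/
theorem stmt5 (n d ℓ : ℕ) (t : ℕ → ℕ) (hd : 2 ≤ d) (hℓ1 : 1 ≤ ℓ) (hℓ : ℓ < d)
    (L : Set (Multiset ℕ)) (hLM : L ⊆ Mset n d ℓ t)
    (hss : StronglyStableSet n d t L) :
    (Shad n d t L).ncard =
      ∑ k ∈ Finset.Icc (1 + ∑ j ∈ Finset.Icc 1 (ℓ - 1), t j) (n - t ℓ), mLe k L :=
  stmt5_general n d ℓ t hℓ1 hℓ L hLM hss
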